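/- Let t0 ∈ ℝ, let ξ : [t0, ∞) → [0, ∞) be absolutely continuous, let β : [t0, ∞) → [0, ∞) be locally integrable, and let C > 0 and M ≥ 0 be such that ∫_t^{t+1/(2C)} β(s) ds ≤ M for all t ≥ t0 and ξ'(t) + C·ξ(t) ≤ β(t) for almost every t ≥ t0. Then for all t ≥ t0, ξ(t) ≤ e^{−C(t−t0)}·ξ(t0) + M·e/(e^{1/2} − 1). -/

import Mathlib

/-!
Multiplying ξ' + Cξ ≤ β by e^{Cs} and integrating by parts (ξ is absolutely continuous) gives
ξ(t) ≤ e^{-C(t-t0)} ξ(t0) + ∫_{t0}^t e^{-C(t-s)} β(s) ds. Cutting [t0, t] into windows of length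
T = 1/(2C) from the right, the weight on the k-th window is at most e^{-k/2}, so the convolution
is bounded by M ∑ e^{-k/2} = M / (1 - e^{-1/2}) ≤ M e / (e^{1/2} - 1).
-/

open MeasureTheory Real Set Filter Topology

theorem AbsolutelyContinuousOnInterval.congr {X : Type*} [PseudoMetricSpace X] {f g : ℝ → X}
    {a b : ℝ}
    (hf : AbsolutelyContinuousOnInterval f a b) (hfg : EqOn f g (uIcc a b)) :
    AbsolutelyContinuousOnInterval g a b := by
  refine hf.congr' ?_
  filter_upwards [eventually_inf_principal.mpr (Eventually.of_forall fun E hE => hE)]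
    with E hE
  refine Finset.sum_congr rfl fun i hi => ?_
  obtain ⟨h1, h2⟩ := hE.1 i hi
  rw [hfg h1, hfg h2]

theorem MeasureTheory.LocallyIntegrableOn.intervalIntegrable {f : ℝ → ℝ} {s : Set ℝ}
    (hf : LocallyIntegrableOn f s) {a b : ℝ} (hab : uIcc a b ⊆ s) :
    IntervalIntegrable f volume a b :=
  (hf.integrableOn_compact_subset hab isCompact_uIcc).intervalIntegrable

theorem absolutelyContinuousOnInterval_of_eq_integral {f f' : ℝ → ℝ} {a b : ℝ}
    (hf' : IntervalIntegrable f' volume a b)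
    (hf : ∀ x ∈ uIcc a b, f x - f a = ∫ s in a..x, f' s) :
    AbsolutelyContinuousOnInterval f a b := by
  have hF := hf'.absolutelyContinuousOnInterval_intervalIntegral (c := a) left_mem_uIcc
  refine (hF.add (g := fun _ => f a) ?_).congr fun x hx => ?_
  · exact contDiffOn_const.absolutelyContinuousOnInterval
  · simp [← hf x hx]

theorem AbsolutelyContinuousOnInterval.le_exp_mul_add_integral_of_deriv_add_mul_le
    {ξ β : ℝ → ℝ} {a b C : ℝ} (hab : a ≤ b) (hξ : AbsolutelyContinuousOnInterval ξ a b)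
    (hβ : IntervalIntegrable β volume a b)
    (hineq : ∀ᵐ t, t ∈ Icc a b → deriv ξ t + C * ξ t ≤ β t) :
    ξ b ≤ exp (-C * (b - a)) * ξ a + ∫ s in a..b, exp (-C * (b - s)) * β s := by
  set g : ℝ → ℝ := fun t => exp (C * t)
  have hg_cont : Continuous g := by fun_prop
  have hg_deriv (t : ℝ) : deriv g t = C * g t := by
    simpa [mul_comm] using (((hasDerivAt_id t).const_mul C).exp).deriv
  have hg : AbsolutelyContinuousOnInterval g a b :=
    (contDiff_exp.comp (contDiff_const.mul contDiff_id)).contDiffOn.absolutelyContinuousOnInterval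
  have hparts : ξ b * g b - ξ a * g a ≤ ∫ t in a..b, g t * β t := by
    rw [← hξ.integral_deriv_mul_eq_sub hg]
    refine intervalIntegral.integral_mono_ae_restrict hab ?_
      (hβ.continuousOn_mul hg_cont.continuousOn) ?_
    · exact (hξ.intervalIntegrable_deriv.mul_continuousOn hg_cont.continuousOn).add
        (hg.intervalIntegrable_deriv.continuousOn_mul hξ.continuousOn)
    · filter_upwards [ae_restrict_mem measurableSet_Icc, ae_restrict_of_ae hineq]
        with t ht hineq
      rw [hg_deriv]
      nlinarith [hineq ht, exp_pos (C * t)]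
  have hweight : ∫ s in a..b, exp (-C * (b - s)) * β s
      = exp (-C * b) * ∫ t in a..b, g t * β t := by
    rw [← intervalIntegral.integral_const_mul]
    refine intervalIntegral.integral_congr fun s _ => ?_
    simp only [g, ← mul_assoc, ← exp_add]
    ring_nf
  have hb : exp (-C * b) * g b = 1 := by simp [g, ← exp_add]
  have ha : exp (-C * b) * g a = exp (-C * (b - a)) := by
    simp only [g, ← exp_add]; ring_nf
  calc ξ b = exp (-C * b) * (ξ b * g b - ξ a * g a) + exp (-C * (b - a)) * ξ a := by
        rw [← ha]; linear_combination -ξ b * hb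
    _ ≤ exp (-C * b) * (∫ t in a..b, g t * β t) + exp (-C * (b - a)) * ξ a := by
        gcongr
    _ = _ := by rw [hweight, add_comm]

theorem integral_exp_mul_le_integral {β : ℝ → ℝ} {a t C : ℝ} (hat : a ≤ t) (hC : 0 ≤ C)
    (hβ_nonneg : ∀ s ∈ Icc a t, 0 ≤ β s) (hβ : IntervalIntegrable β volume a t) :
    ∫ s in a..t, exp (-C * (t - s)) * β s ≤ ∫ s in a..t, β s := by
  refine intervalIntegral.integral_mono_on hat (hβ.continuousOn_mul (by fun_prop)) hβ
    fun s hs => ?_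
  have hexp : exp (-C * (t - s)) ≤ 1 := exp_le_one_iff.mpr (by nlinarith [hs.2])
  nlinarith [hβ_nonneg s hs]

theorem integral_exp_mul_sub_eq (β : ℝ → ℝ) (a b t C T : ℝ) :
    ∫ s in a..b, exp (-C * (t - s)) * β s
      = exp (-C * T) * ∫ s in a..b, exp (-C * (t - T - s)) * β s := by
  rw [← intervalIntegral.integral_const_mul]
  refine intervalIntegral.integral_congr fun s _ => ?_
  simp only [← mul_assoc, ← exp_add]
  ring_nf

theorem integral_exp_mul_le_div_of_integral_window_le {β : ℝ → ℝ} {t0 C T M : ℝ}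
    (hC : 0 < C) (hT : 0 < T) (hM : 0 ≤ M) (hβ_nonneg : ∀ t, t0 ≤ t → 0 ≤ β t)
    (hβ : LocallyIntegrableOn β (Ici t0)) (hwin : ∀ t, t0 ≤ t → ∫ s in t..t + T, β s ≤ M)
    {t : ℝ} (ht : t0 ≤ t) :
    ∫ s in t0..t, exp (-C * (t - s)) * β s ≤ M / (1 - exp (-C * T)) := by
  set q := exp (-C * T)
  have hq : q < 1 := exp_lt_one_iff.mpr (by nlinarith)
  have hK : M ≤ M / (1 - q) := le_div_self hM (by linarith) (by linarith [exp_pos (-C * T)])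
  have hK_fix : q * (M / (1 - q)) + M = M / (1 - q) := by
    field_simp [(by linarith : (1 - q) ≠ 0)]; ring
  have hβi {a b : ℝ} (ha : t0 ≤ a) (hb : t0 ≤ b) : IntervalIntegrable β volume a b :=
    hβ.intervalIntegrable fun x hx => le_trans (le_min ha hb) hx.1
  have hwindow {a b : ℝ} (ha : t0 ≤ a) (hab : a ≤ b) (hba : b ≤ a + T) :
      ∫ s in a..b, exp (-C * (b - s)) * β s ≤ M := by
    calc ∫ s in a..b, exp (-C * (b - s)) * β s ≤ ∫ s in a..b, β s :=
          integral_exp_mul_le_integral hab hC.le (fun s hs => hβ_nonneg s (ha.trans hs.1))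
            (hβi ha (ha.trans hab))
      _ ≤ ∫ s in a..a + T, β s :=
          intervalIntegral.integral_mono_interval le_rfl hab hba
            (ae_restrict_of_forall_mem measurableSet_Ioc fun s hs =>
              hβ_nonneg s (ha.trans hs.1.le))
            (hβi ha (by linarith))
      _ ≤ M := hwin a ha
  have hsteps (n : ℕ) : ∀ u, t0 ≤ u → u ≤ t0 + n * T →
      ∫ s in t0..u, exp (-C * (u - s)) * β s ≤ M / (1 - q) := by
    induction n with
    | zero =>
      intro u hu hun
      rw [le_antisymm (by simpa using hun) hu, intervalIntegral.integral_same]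
      exact hM.trans hK
    | succ n ih =>
      intro u hu hun
      rcases le_or_gt u (t0 + T) with hfirst | hlater
      · exact (hwindow le_rfl hu hfirst).trans hK
      have hmid : t0 ≤ u - T := by linarith
      have hweight (a b : ℝ) (ha : t0 ≤ a) (hb : t0 ≤ b) :
          IntervalIntegrable (fun s => exp (-C * (u - s)) * β s) volume a b :=
        (hβi ha hb).continuousOn_mul (by fun_prop)
      rw [← intervalIntegral.integral_add_adjacent_intervals (hweight _ _ le_rfl hmid)
        (hweight _ _ hmid hu), integral_exp_mul_sub_eq β t0 (u - T) u C T]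
      have hrec := ih (u - T) hmid (by push_cast at hun; linarith)
      have hlast := hwindow (b := u) hmid (by linarith) (by linarith)
      calc q * (∫ s in t0..u - T, exp (-C * (u - T - s)) * β s)
            + ∫ s in u - T..u, exp (-C * (u - s)) * β s
          ≤ q * (M / (1 - q)) + M := by gcongr
        _ = M / (1 - q) := hK_fix
  obtain ⟨n, hn⟩ := exists_nat_ge ((t - t0) / T)
  exact hsteps n t ht (by rw [div_le_iff₀ hT] at hn; linarith)

theorem eq_of_not_intervalIntegrable_of_sub_eq_integral {ξ ξ' : ℝ → ℝ} {t0 t1 : ℝ}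
    (ht1 : t0 ≤ t1) (hξ_ftc : ∀ t, t0 ≤ t → ξ t - ξ t0 = ∫ s in t0..t, ξ' s)
    (hξ' : ¬IntervalIntegrable ξ' volume t0 t1) {t : ℝ} (ht : t1 ≤ t) : ξ t = ξ t0 := by
  have hξ't : ¬IntervalIntegrable ξ' volume t0 t := fun h =>
    hξ' (h.mono_set (uIcc_subset_uIcc left_mem_uIcc (mem_uIcc_of_le ht1 ht)))
  linarith [hξ_ftc t (ht1.trans ht), intervalIntegral.integral_undef hξ't]

/-- Since `∫` of a non-integrable function is `0`, the hypothesis `hξ_ftc` then freezes `ξ` at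
`ξ t0` from `t` on, so `ξ' = 0` a.e. there and the differential inequality reads `C ξ t ≤ β`. -/
theorem mul_mul_le_of_not_intervalIntegrable {ξ ξ' β : ℝ → ℝ} {t0 t C T M : ℝ}
    (ht : t0 ≤ t) (hT : 0 ≤ T) (hβ : LocallyIntegrableOn β (Ici t0))
    (hξ_deriv : ∀ᵐ s, t0 ≤ s → HasDerivAt ξ (ξ' s) s)
    (hξ_ftc : ∀ s, t0 ≤ s → ξ s - ξ t0 = ∫ u in t0..s, ξ' u)
    (hwin : ∫ s in t..t + T, β s ≤ M) (hineq : ∀ᵐ s, t0 ≤ s → ξ' s + C * ξ s ≤ β s)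
    (hξ' : ¬IntervalIntegrable ξ' volume t0 t) :
    T * (C * ξ t) ≤ M := by
  have hfrozen {s : ℝ} (hs : t ≤ s) : ξ s = ξ t :=
    (eq_of_not_intervalIntegrable_of_sub_eq_integral ht hξ_ftc hξ' hs).trans
      (eq_of_not_intervalIntegrable_of_sub_eq_integral ht hξ_ftc hξ' le_rfl).symm
  have hlower : ∀ᵐ s, s ∈ Ioc t (t + T) → C * ξ t ≤ β s := by
    filter_upwards [hξ_deriv, hineq] with s hderiv hineq hs
    have hts : t0 ≤ s := ht.trans hs.1.le
    have hξ'_zero : ξ' s = 0 :=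
      ((hderiv hts).congr_of_eventuallyEq (eventually_gt_nhds hs.1 |>.mono
        fun u hu => (hfrozen hu.le).symm)).unique (hasDerivAt_const s (ξ t))
    simpa [hξ'_zero, hfrozen hs.1.le] using hineq hts
  calc T * (C * ξ t) = ∫ _ in t..t + T, C * ξ t := by
        rw [intervalIntegral.integral_const, add_sub_cancel_left, smul_eq_mul]
    _ ≤ ∫ s in t..t + T, β s :=
        intervalIntegral.integral_mono_ae_restrict (by linarith) intervalIntegrable_const
          (hβ.intervalIntegrable fun s hs => ht.trans (by simpa [hT] using hs.1))
          (by rw [← Measure.restrict_congr_set Ioc_ae_eq_Icc]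
              exact (ae_restrict_iff' measurableSet_Ioc).mpr hlower)
    _ ≤ M := hwin

theorem exp_one_eq_exp_half_mul_self : exp 1 = exp (1 / 2) * exp (1 / 2) := by
  rw [← exp_add]; norm_num

theorem one_div_one_sub_exp_neg_half_le :
    1 / (1 - exp (-(1 / 2))) ≤ exp 1 / (exp (1 / 2) - 1) := by
  have hx : 1 < exp (1 / 2) := one_lt_exp_iff.mpr (by norm_num)
  have hrewrite : 1 / (1 - exp (-(1 / 2))) = exp (1 / 2) / (exp (1 / 2) - 1) := by
    rw [exp_neg]; field_simp
  rw [hrewrite, exp_one_eq_exp_half_mul_self]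
  gcongr
  exact le_mul_of_one_le_left (by positivity) hx.le

theorem two_le_exp_one_div_exp_half_sub_one : 2 ≤ exp 1 / (exp (1 / 2) - 1) := by
  have hx : 1 < exp (1 / 2) := one_lt_exp_iff.mpr (by norm_num)
  rw [exp_one_eq_exp_half_mul_self, le_div_iff₀ (by linarith)]
  nlinarith [sq_nonneg (exp (1 / 2) - 2)]

theorem gronwall_uniform_in_time_half_general
    (t0 : ℝ) (ξ ξ' β : ℝ → ℝ) (C M : ℝ)
    (hC : 0 < C)
    (hξ_nonneg : ∀ t, t0 ≤ t → 0 ≤ ξ t)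
    (hβ_nonneg : ∀ t, t0 ≤ t → 0 ≤ β t)
    (hβ_loc : LocallyIntegrableOn β (Set.Ici t0))
    (hξ_deriv : ∀ᵐ t ∂(volume : Measure ℝ), t0 ≤ t → HasDerivAt ξ (ξ' t) t)
    (hξ_ftc : ∀ t, t0 ≤ t → ξ t - ξ t0 = ∫ s in t0..t, ξ' s)
    (hsup : ∀ t, t0 ≤ t → ∫ s in t..(t + 1 / (2 * C)), β s ≤ M)
    (hineq : ∀ᵐ t ∂(volume : Measure ℝ), t0 ≤ t → ξ' t + C * ξ t ≤ β t) :
    ∀ t, t0 ≤ t →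
      ξ t ≤ Real.exp (-C * (t - t0)) * ξ t0 +
        M * (Real.exp 1 / (Real.exp (1 / 2) - 1)) := by
  intro t ht
  have hT : 0 < 1 / (2 * C) := by positivity
  have hM : 0 ≤ M := (intervalIntegral.integral_nonneg (by linarith) fun s hs =>
    hβ_nonneg s hs.1).trans (hsup t0 le_rfl)
  have hsub : uIcc t0 t ⊆ Ici t0 := by rw [uIcc_of_le ht]; exact Icc_subset_Ici_self
  by_cases hξ' : IntervalIntegrable ξ' volume t0 t
  · have hac : AbsolutelyContinuousOnInterval ξ t0 t :=
      absolutelyContinuousOnInterval_of_eq_integral hξ' fun s hs => hξ_ftc s (hsub hs)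
    have hderiv : ∀ᵐ s, s ∈ Icc t0 t → deriv ξ s + C * ξ s ≤ β s := by
      filter_upwards [hξ_deriv, hineq] with s hderiv hineq hs
      rw [(hderiv hs.1).deriv]
      exact hineq hs.1
    have hCT : -C * (1 / (2 * C)) = -(1 / 2) := by field_simp
    calc ξ t ≤ exp (-C * (t - t0)) * ξ t0 + ∫ s in t0..t, exp (-C * (t - s)) * β s :=
          hac.le_exp_mul_add_integral_of_deriv_add_mul_le ht (hβ_loc.intervalIntegrable hsub)
            hderiv
      _ ≤ exp (-C * (t - t0)) * ξ t0 + M * (1 / (1 - exp (-(1 / 2)))) := by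
          rw [← hCT, ← div_eq_mul_one_div]
          gcongr
          exact integral_exp_mul_le_div_of_integral_window_le hC hT hM hβ_nonneg hβ_loc hsup ht
      _ ≤ _ := by
          gcongr exp (-C * (t - t0)) * ξ t0 + M * ?_
          exact one_div_one_sub_exp_neg_half_le
  · have hfrozen := mul_mul_le_of_not_intervalIntegrable ht hT.le hβ_loc hξ_deriv hξ_ftc
      (hsup t ht) hineq hξ'
    have hξt : ξ t ≤ 2 * M := by field_simp at hfrozen; linarith
    nlinarith [exp_pos (-C * (t - t0)), hξ_nonneg t0 le_rfl, two_le_exp_one_div_exp_half_sub_one]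

/-- Specialization of the paper's Gronwall-type lemma with T = 1/(2C) (so that
CT = 1/2 and e^{2CT}/(e^{CT} - 1) = e/(e^{1/2} - 1)): if ξ : [t0,∞) → [0,∞) is
absolutely continuous (encoded by: ξ has derivative ξ' a.e. on [t0,∞) and satisfies
the fundamental theorem of calculus there), β : [t0,∞) → [0,∞) is locally integrable,
∫_t^{t+1/(2C)} β ≤ M for all t ≥ t0 and ξ' + C ξ ≤ β a.e. on [t0,∞), then
ξ(t) ≤ e^{-C(t-t0)} ξ(t0) + M e/(e^{1/2} - 1) for all t ≥ t0. -/
theorem gronwall_uniform_in_time_half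
    (t0 : ℝ) (ξ ξ' β : ℝ → ℝ) (C M : ℝ)
    (hC : 0 < C) (hM : 0 ≤ M)
    (hξ_nonneg : ∀ t, t0 ≤ t → 0 ≤ ξ t)
    (hβ_nonneg : ∀ t, t0 ≤ t → 0 ≤ β t)
    (hβ_loc : LocallyIntegrableOn β (Set.Ici t0))
    (hξ_deriv : ∀ᵐ t ∂(volume : Measure ℝ), t0 ≤ t → HasDerivAt ξ (ξ' t) t)
    (hξ_ftc : ∀ t, t0 ≤ t → ξ t - ξ t0 = ∫ s in t0..t, ξ' s)
    (hsup : ∀ t, t0 ≤ t → ∫ s in t..(t + 1 / (2 * C)), β s ≤ M)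
    (hineq : ∀ᵐ t ∂(volume : Measure ℝ), t0 ≤ t → ξ' t + C * ξ t ≤ β t) :
    ∀ t, t0 ≤ t →
      ξ t ≤ Real.exp (-C * (t - t0)) * ξ t0 +
        M * (Real.exp 1 / (Real.exp (1 / 2) - 1)) :=
  gronwall_uniform_in_time_half_general t0 ξ ξ' β C M hC hξ_nonneg hβ_nonneg hβ_loc hξ_deriv hξ_ftc
    hsup hineq
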